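/- arXiv:2011.11181 — 2 statements merged into one kernel-verified Lean document; each statement's English description precedes it below -/
import Mathlib

section
/- Let Ψ(z) = (2/π)(z·arcsin(z) + √(1−z²) − 1). Then for all x ∈ [0,1], x²/π ≤ Ψ(x) ≤ 1.2·x²/π. -/
/-!
With `F t = t * arcsin t + √(1 - t²) - 1` we have `Ψ = (2/π) F`, `F 0 = 0` and `F' = arcsin`.
Since `arcsin t ≥ t`, `F x ≥ x²/2`. Since `arcsin t ≤ tan (arcsin t) = t / √(1 - t²)`, the
function `2 F t - t * arcsin t` is nonincreasing, so `2 F t ≤ t F' t`; this makes `F t / t²`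
nondecreasing, hence `F x ≤ F 1 * x² = (π/2 - 1) x²`, and `π - 2 ≤ 1.2` because `π ≤ 3.2`.
-/

open Real Set

noncomputable def arcsinAntideriv (t : ℝ) : ℝ := t * arcsin t + √(1 - t ^ 2) - 1

namespace Real

theorem self_le_arcsin {x : ℝ} (h₀ : 0 ≤ x) (h₁ : x ≤ 1) : x ≤ arcsin x := by
  simpa only [sin_arcsin (by linarith) h₁] using sin_le (arcsin_nonneg.2 h₀)

theorem arcsin_le_div_sqrt {x : ℝ} (h₀ : 0 ≤ x) (h₁ : x < 1) :
    arcsin x ≤ x / √(1 - x ^ 2) :=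
  tan_arcsin x ▸ le_tan (arcsin_nonneg.2 h₀) (arcsin_lt_pi_div_two.2 h₁)

end Real

theorem monotoneOn_div_sq_of_two_mul_le {f f' : ℝ → ℝ} {a b : ℝ} (ha : 0 < a)
    (hf : ContinuousOn f (Icc a b)) (hf' : ∀ t ∈ Ioo a b, HasDerivAt f (f' t) t)
    (h : ∀ t ∈ Ioo a b, 2 * f t ≤ t * f' t) :
    MonotoneOn (fun t => f t / t ^ 2) (Icc a b) := by
  have hpos : ∀ t ∈ Icc a b, t ^ 2 ≠ 0 := fun t ht => by have := ha.trans_le ht.1; positivity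
  refine monotoneOn_of_hasDerivWithinAt_nonneg (convex_Icc a b)
    (f' := fun t => (f' t * t ^ 2 - f t * (2 * t)) / (t ^ 2) ^ 2)
    (hf.div (continuous_pow 2).continuousOn hpos) (fun t ht => ?_) fun t ht => ?_
  all_goals rw [interior_Icc] at ht
  · exact (((hf' t ht).div (hasDerivAt_pow 2 t) (hpos t (Ioo_subset_Icc_self ht))).congr_deriv
      (by norm_num)).hasDerivWithinAt
  · have ht₀ : 0 < t := ha.trans ht.1
    have := h t ht
    apply div_nonneg _ (by positivity)
    nlinarith

theorem hasDerivAt_arcsinAntideriv {t : ℝ} (h₀ : -1 < t) (h₁ : t < 1) :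
    HasDerivAt arcsinAntideriv (arcsin t) t := by
  have hpos : 0 < 1 - t ^ 2 := by nlinarith
  have hsqrt : HasDerivAt (fun t : ℝ => √(1 - t ^ 2)) (-t / √(1 - t ^ 2)) t := by
    convert ((hasDerivAt_pow 2 t).const_sub 1).sqrt hpos.ne' using 1
    rw [neg_div, neg_div, Nat.cast_ofNat, pow_one, mul_div_mul_left _ _ two_ne_zero]
  have hprod := (hasDerivAt_id t).mul (hasDerivAt_arcsin h₀.ne' h₁.ne)
  exact ((hprod.add hsqrt).sub_const 1).congr_deriv (by simp only [id]; ring)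

theorem continuous_arcsinAntideriv : Continuous arcsinAntideriv := by
  unfold arcsinAntideriv; fun_prop

theorem arcsinAntideriv_zero : arcsinAntideriv 0 = 0 := by simp [arcsinAntideriv]

theorem arcsinAntideriv_one : arcsinAntideriv 1 = π / 2 - 1 := by simp [arcsinAntideriv]

theorem sq_div_two_le_arcsinAntideriv {x : ℝ} (hx : x ∈ Icc (0 : ℝ) 1) :
    x ^ 2 / 2 ≤ arcsinAntideriv x := by
  refine image_le_of_deriv_right_le_deriv_boundary (f' := id) (B' := arcsin)
    (continuous_pow 2 |>.div_const 2).continuousOn (fun t _ => ?_) (by simp [arcsinAntideriv_zero])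
    continuous_arcsinAntideriv.continuousOn
    (fun t ht => (hasDerivAt_arcsinAntideriv (by linarith [ht.1]) ht.2).hasDerivWithinAt)
    (fun t ht => self_le_arcsin ht.1 ht.2.le) hx
  simpa using ((hasDerivAt_pow 2 t).div_const 2).hasDerivWithinAt

theorem two_mul_arcsinAntideriv_le {x : ℝ} (hx : x ∈ Icc (0 : ℝ) 1) :
    2 * arcsinAntideriv x ≤ x * arcsin x := by
  refine image_le_of_deriv_right_le_deriv_boundary (f := fun t => 2 * arcsinAntideriv t)
    (f' := fun t => 2 * arcsin t) (B := fun t => t * arcsin t)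
    (B' := fun t => 1 * arcsin t + t * (1 / √(1 - t ^ 2)))
    (continuous_arcsinAntideriv.const_mul 2).continuousOn (fun t ht => ?_)
    (by simp [arcsinAntideriv_zero]) (by fun_prop) (fun t ht => ?_)
    (fun t ht => ?_) hx
  · exact ((hasDerivAt_arcsinAntideriv (by linarith [ht.1]) ht.2).const_mul 2).hasDerivWithinAt
  · exact ((hasDerivAt_id t).mul (hasDerivAt_arcsin (by linarith [ht.1]) ht.2.ne)).hasDerivWithinAt
  · have := arcsin_le_div_sqrt ht.1 ht.2
    simp only [one_mul, mul_one_div]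
    linarith

theorem arcsinAntideriv_le_mul_sq {x : ℝ} (hx : x ∈ Icc (0 : ℝ) 1) :
    arcsinAntideriv x ≤ (π / 2 - 1) * x ^ 2 := by
  obtain rfl | hx₀ := hx.1.eq_or_lt
  · simp [arcsinAntideriv_zero]
  have hmono := monotoneOn_div_sq_of_two_mul_le hx₀ continuous_arcsinAntideriv.continuousOn
    (fun t ht => hasDerivAt_arcsinAntideriv (by linarith [ht.1]) ht.2)
    (fun t ht => two_mul_arcsinAntideriv_le ⟨hx₀.le.trans ht.1.le, ht.2.le⟩)
  have : arcsinAntideriv x / x ^ 2 ≤ arcsinAntideriv 1 / 1 ^ 2 :=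
    hmono (left_mem_Icc.2 hx.2) (right_mem_Icc.2 hx.2) hx.2
  rwa [one_pow, div_one, arcsinAntideriv_one, div_le_iff₀ (by positivity)] at this

/-- For `Ψ(z) = (2/π)(z·arcsin z + √(1-z²) - 1)` and all `x ∈ [0,1]`,
`x²/π ≤ Ψ(x) ≤ 1.2·x²/π`. -/
theorem psi_quadratic_bounds (Ψ : ℝ → ℝ)
    (hΨ : ∀ z ∈ Set.Icc (0:ℝ) 1,
      Ψ z = (2 / π) * (z * arcsin z + Real.sqrt (1 - z ^ 2) - 1)) :
    ∀ x ∈ Set.Icc (0:ℝ) 1, x ^ 2 / π ≤ Ψ x ∧ Ψ x ≤ 1.2 * x ^ 2 / π := by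
  intro x hx
  rw [hΨ x hx, ← arcsinAntideriv, div_mul_eq_mul_div, div_le_div_iff_of_pos_right pi_pos,
    div_le_div_iff_of_pos_right pi_pos]
  have hlower := sq_div_two_le_arcsinAntideriv hx
  have hupper := arcsinAntideriv_le_mul_sq hx
  have hπ : π ≤ 3.2 := pi_lt_d2.le.trans (by norm_num)
  constructor
  · linarith
  · nlinarith [sq_nonneg x]
end

section
/- Let k ≥ 2 and m ≥ k + 2 be integers, and let g₁,…,g_m be real numbers that are algebraically generic (e.g., drawn i.i.d. from N(0,1); almost surely the following holds). Define v_S = Σ_{i∈S} g_i for every subset S ⊆ [m] with |S| = k. Then the system of equations |Σ_{i∈S} a_i| = |v_S| for all S with |S| = k, in unknowns a₁,…,a_m, has exactly two solutions, namely (a_i) = (g_i) and (a_i) = (−g_i). -/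
/-!
Since `Measure.pi` of Gaussians is absolutely continuous with respect to Lebesgue measure and
rational hyperplanes are Lebesgue-null, almost surely the `g i` are linearly independent over `ℚ`.
Fix such a `g` and a solution `a`; every `k`-set `S` then has a sign, according to whether
`∑_S a = ∑_S g` or `∑_S a = -∑_S g`. If all signs agree then `a = g` or `a = -g`, because
`k`-subset sums determine a vector when `0 < k < m`. Otherwise some exchange of one element turns
a `+` set `T ∪ {i}` into a `-` set `T ∪ {j}`; a third point `l` gives, up to replacing `g` by `-g`,
two `+` sets and one `-` set of the form `T ∪ {x}`, and the signs of the sets `T \ {t} ∪ {x, y}`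
then force a nontrivial rational relation among the `g i`.
-/

open MeasureTheory ProbabilityTheory Finset

theorem MeasureTheory.Measure.AbsolutelyContinuous.pi_fin {n : ℕ} {α : Fin n → Type*}
    [∀ i, MeasurableSpace (α i)] {μ ν : ∀ i, Measure (α i)} [∀ i, SigmaFinite (μ i)]
    [∀ i, SigmaFinite (ν i)] (h : ∀ i, μ i ≪ ν i) : Measure.pi μ ≪ Measure.pi ν := by
  induction n with
  | zero => rw [Measure.pi_of_empty μ, Measure.pi_of_empty ν]
  | succ n ih =>
    rw [← ((measurePreserving_piFinSuccAbove μ 0).symm _).map_eq,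
      ← ((measurePreserving_piFinSuccAbove ν 0).symm _).map_eq]
    exact ((h 0).prod (ih fun j => h _)).map (MeasurableEquiv.measurable _)

theorem MeasureTheory.Measure.AbsolutelyContinuous.pi {ι : Type*} [Fintype ι]
    {α : ι → Type*} [∀ i, MeasurableSpace (α i)] {μ ν : ∀ i, Measure (α i)}
    [∀ i, SigmaFinite (μ i)] [∀ i, SigmaFinite (ν i)] (h : ∀ i, μ i ≪ ν i) :
    Measure.pi μ ≪ Measure.pi ν := by
  let e := Fintype.equivFin ι
  rw [← (measurePreserving_piCongrLeft μ e.symm).map_eq,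
    ← (measurePreserving_piCongrLeft ν e.symm).map_eq]
  exact (pi_fin fun i => h _).map (MeasurableEquiv.measurable _)

theorem ae_linearIndependent_rat {ι : Type*} [Fintype ι] {μ : Measure (ι → ℝ)}
    (hμ : μ ≪ volume) : ∀ᵐ g ∂μ, LinearIndependent ℚ g := by
  simp_rw [Fintype.linearIndependent_iff]
  refine ae_all_iff.2 fun c => ?_
  by_cases hc : ∀ i, c i = 0
  · exact Filter.Eventually.of_forall fun _ _ => hc
  obtain ⟨i₀, hi₀⟩ := not_forall.1 hc
  let ℓ : (ι → ℝ) →ₗ[ℝ] ℝ := Fintype.linearCombination ℝ fun i => (c i : ℝ)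
  have hℓ : LinearMap.ker ℓ ≠ ⊤ := by
    classical
    intro htop
    have : ℓ (Pi.single i₀ 1) = 0 := LinearMap.ker_eq_top.1 htop ▸ rfl
    simp [ℓ, Fintype.linearCombination_apply_single, hi₀] at this
  refine ae_iff.2 (measure_mono_null (fun g hg => ?_) (hμ (Measure.addHaar_submodule volume _ hℓ)))
  simpa [ℓ, Fintype.linearCombination_apply, Rat.smul_def, mul_comm] using
    (Classical.not_imp.1 hg).1

theorem LinearIndependent.sum_add_sum_ne_zero {ι M : Type*} [AddCommGroup M] [Module ℚ M]
    {g : ι → M} (hg : LinearIndependent ℚ g) {A : Finset ι} (hA : A.Nonempty) (B : Finset ι) :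
    ∑ i ∈ A, g i + ∑ i ∈ B, g i ≠ 0 := by
  classical
  intro h
  obtain ⟨i, hi⟩ := hA
  have := linearIndependent_iff'.1 hg (A ∪ B)
    (fun i => (if i ∈ A then 1 else 0) + (if i ∈ B then 1 else 0)) (by
      simpa only [add_smul, ite_smul, one_smul, zero_smul, sum_add_distrib, sum_ite_mem,
        union_inter_cancel_left, union_inter_cancel_right] using h) i (mem_union_left _ hi)
  split_ifs at this <;> norm_num at this

theorem Finset.exists_insert_swap {α : Type*} [DecidableEq α] (P : Finset α → Prop)
    {S S' : Finset α} (hcard : #S = #S') (hS : P S) (hS' : ¬ P S') :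
    ∃ T i j, i ∉ T ∧ j ∉ T ∧ #(insert i T) = #S ∧ P (insert i T) ∧ ¬ P (insert j T) := by
  obtain ⟨n, hn⟩ : ∃ n, #(S \ S') = n := ⟨_, rfl⟩
  induction n generalizing S with
  | zero =>
    rw [card_eq_zero, sdiff_eq_empty_iff_subset] at hn
    exact absurd (eq_of_subset_of_card_le hn hcard.ge ▸ hS) hS'
  | succ n ih =>
    obtain ⟨i, hi⟩ : (S \ S').Nonempty := card_pos.1 (by omega)
    obtain ⟨j, hj⟩ : (S' \ S).Nonempty := card_pos.1 (by rw [← card_sdiff_comm hcard]; omega)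
    rw [mem_sdiff] at hi hj
    have hjS : j ∉ S.erase i := fun h => hj.2 (mem_of_mem_erase h)
    have hcard' : #(insert j (S.erase i)) = #S := by
      rw [card_insert_of_notMem hjS, card_erase_add_one hi.1]
    by_cases hP : P (insert j (S.erase i))
    · obtain ⟨T, i', j', h⟩ := ih (hcard'.trans hcard) hP (by
        rw [insert_sdiff_of_mem _ hj.1, erase_sdiff_comm, card_erase_of_mem (mem_sdiff.2 hi)]
        omega)
      exact ⟨T, i', j', h.1, h.2.1, h.2.2.1.trans hcard', h.2.2.2⟩
    · exact ⟨S.erase i, i, j, notMem_erase i S, hjS, by rw [insert_erase hi.1],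
        by rwa [insert_erase hi.1], hP⟩

theorem Finset.eq_of_forall_card_eq_sum_eq {ι M : Type*} [Fintype ι] [DecidableEq ι]
    [AddCommGroup M] [IsAddTorsionFree M] {k : ℕ} (hk : 0 < k) (hkι : k < Fintype.card ι)
    {a b : ι → M} (h : ∀ S : Finset ι, #S = k → ∑ i ∈ S, a i = ∑ i ∈ S, b i) : a = b := by
  have hd : ∀ S : Finset ι, #S = k → ∑ i ∈ S, (a - b) i = 0 := fun S hS => by
    simp [sum_sub_distrib, h S hS]
  have hconst : ∀ i j, (a - b) i = (a - b) j := by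
    intro i j
    obtain ⟨T, hT, hTk⟩ := exists_subset_card_eq (s := univ \ {i, j}) (n := k - 1) (by
      rw [card_sdiff_of_subset (subset_univ _), card_univ]
      have := card_le_two (a := i) (b := j)
      omega)
    have hi : i ∉ T := fun h => (mem_sdiff.1 (hT h)).2 (by simp)
    have hj : j ∉ T := fun h => (mem_sdiff.1 (hT h)).2 (by simp)
    have hiT := hd (insert i T) (by rw [card_insert_of_notMem hi]; omega)
    have hjT := hd (insert j T) (by rw [card_insert_of_notMem hj]; omega)
    rw [sum_insert hi] at hiT
    rw [sum_insert hj] at hjT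
    exact add_right_cancel (hiT.trans hjT.symm)
  obtain ⟨S, -, hS⟩ := exists_subset_card_eq (s := (univ : Finset ι)) (n := k)
    (by rw [card_univ]; omega)
  funext i
  have hSi := hd S hS
  rw [sum_congr rfl fun j _ => hconst j i, sum_const, hS, nsmul_eq_zero_iff] at hSi
  exact sub_eq_zero.1 (hSi.resolve_right hk.ne')

section AbsSubsetSums

variable {ι : Type*} [DecidableEq ι] {a g : ι → ℝ}

theorem sum_insert_ne_neg_sum_insert (hg : LinearIndependent ℚ g) {T : Finset ι}
    (habs : ∀ S : Finset ι, #S = #T + 1 → |∑ i ∈ S, a i| = |∑ i ∈ S, g i|)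
    (hT : T.Nonempty) {p q j : ι} (hp : p ∉ T) (hq : q ∉ T) (hj : j ∉ T)
    (hpq : p ≠ q) (hpj : p ≠ j) (hqj : q ≠ j)
    (hP : ∑ i ∈ insert p T, a i = ∑ i ∈ insert p T, g i)
    (hQ : ∑ i ∈ insert q T, a i = ∑ i ∈ insert q T, g i) :
    ∑ i ∈ insert j T, a i ≠ -∑ i ∈ insert j T, g i := by
  intro hJ
  obtain ⟨t, ht⟩ := hT
  set U := T.erase t
  have notMem_U : ∀ x ∉ T, x ∉ U := fun x hx h => hx (mem_of_mem_erase h)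
  have sum_T : ∀ (f : ι → ℝ) x, x ∉ T → ∑ i ∈ insert x T, f i = f x + f t + ∑ i ∈ U, f i :=
    fun f x hx => by rw [sum_insert hx, ← add_sum_erase _ _ ht, add_assoc]
  have notMem_insert : ∀ x y, x ∉ T → x ≠ y → x ∉ insert y U := fun x y hx hxy h =>
    (mem_insert.1 h).elim hxy (notMem_U x hx)
  have sum_U : ∀ (f : ι → ℝ) x y, x ∉ T → y ∉ T → x ≠ y →
      ∑ i ∈ insert x (insert y U), f i = f x + f y + ∑ i ∈ U, f i := fun f x y hx hy hxy => by
    rw [sum_insert (notMem_insert x y hx hxy), sum_insert (notMem_U y hy), add_assoc]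
  have sign_U : ∀ x y, x ∉ T → y ∉ T → x ≠ y →
      a x + a y + ∑ i ∈ U, a i = g x + g y + ∑ i ∈ U, g i ∨
        a x + a y + ∑ i ∈ U, a i = -(g x + g y + ∑ i ∈ U, g i) := fun x y hx hy hxy => by
    rw [← sum_U a x y hx hy hxy, ← sum_U g x y hx hy hxy]
    refine abs_eq_abs.1 (habs _ ?_)
    rw [card_insert_of_notMem (notMem_insert x y hx hxy), card_insert_of_notMem (notMem_U y hy),
      card_erase_add_one ht]
  have hjT : ∑ i ∈ insert j T, g i ≠ 0 := by
    simpa using hg.sum_add_sum_ne_zero (insert_nonempty j T) ∅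
  have hgpq : g p ≠ g q := hg.injective.ne hpq
  have hjTpqU := hg.sum_add_sum_ne_zero (insert_nonempty j T) (insert p (insert q U))
  rw [sum_U g p q hp hq hpq] at hjTpqU
  simp only [sum_T _ _ hp, sum_T _ _ hq, sum_T _ _ hj] at hP hQ hJ hjT hjTpqU
  -- each of the eight sign patterns of the three sets `U ∪ {x, y}` violates one of these relations
  rcases sign_U p j hp hj hpj with h1 | h1 <;> rcases sign_U q j hq hj hqj with h2 | h2 <;>
    rcases sign_U p q hp hq hpq with h3 | h3 <;>
    first | exact hjT (by linarith) | exact hgpq (by linarith) | exact hjTpqU (by linarith)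

theorem eq_or_eq_neg_of_forall_abs_sum_eq [Fintype ι] (hg : LinearIndependent ℚ g) {k : ℕ}
    (hk : 2 ≤ k) (hkι : k + 2 ≤ Fintype.card ι)
    (ha : ∀ S : Finset ι, #S = k → |∑ i ∈ S, a i| = |∑ i ∈ S, g i|) : a = g ∨ a = -g := by
  by_contra! hne
  obtain ⟨S, hS, hSa⟩ : ∃ S : Finset ι, #S = k ∧ ∑ i ∈ S, a i = ∑ i ∈ S, g i := by
    by_contra! h
    refine hne.2 (eq_of_forall_card_eq_sum_eq (k := k) (by omega) (by omega) fun S hS => ?_)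
    simpa using (abs_eq_abs.1 (ha S hS)).resolve_left (h S hS)
  obtain ⟨S', hS', hS'a⟩ : ∃ S' : Finset ι, #S' = k ∧ ∑ i ∈ S', a i ≠ ∑ i ∈ S', g i := by
    by_contra! h
    exact hne.1 (eq_of_forall_card_eq_sum_eq (k := k) (by omega) (by omega) h)
  obtain ⟨T, i, j, hi, hj, hTS, hPi, hPj⟩ :=
    exists_insert_swap (fun U => ∑ l ∈ U, a l = ∑ l ∈ U, g l) (hS.trans hS'.symm) hSa hS'a
  rw [card_insert_of_notMem hi, hS] at hTS
  have habs : ∀ U : Finset ι, #U = #T + 1 → |∑ l ∈ U, a l| = |∑ l ∈ U, g l| :=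
    fun U hU => ha U (hU.trans hTS)
  have hij : i ≠ j := by rintro rfl; exact hPj hPi
  have hJ : ∑ l ∈ insert j T, a l = -∑ l ∈ insert j T, g l :=
    (abs_eq_abs.1 (habs _ (card_insert_of_notMem hj))).resolve_left hPj
  obtain ⟨l, -, hl⟩ := exists_mem_notMem_of_card_lt_card (s := insert i (insert j T))
    (t := univ) (by grw [card_univ, card_insert_le, card_insert_le]; omega)
  simp only [mem_insert, not_or] at hl
  obtain ⟨hli, hlj, hl⟩ := hl
  have hT : T.Nonempty := card_pos.1 (by omega)
  rcases abs_eq_abs.1 (habs (insert l T) (card_insert_of_notMem hl)) with hL | hL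
  · exact sum_insert_ne_neg_sum_insert hg habs hT hi hl hj (Ne.symm hli) hij hlj hPi hL hJ
  · exact sum_insert_ne_neg_sum_insert hg.neg (by simpa using habs) hT hj hl hi (Ne.symm hlj)
      hij.symm hli (by simpa using hJ) (by simpa using hL) (by simpa using hPi)

end AbsSubsetSums

/-- For `k ≥ 2`, `m ≥ k + 2`, and `g₁,…,g_m` i.i.d. standard Gaussians, almost
surely the system `|Σ_{i∈S} a_i| = |Σ_{i∈S} g_i|` over all `k`-subsets `S` of `[m]`
has exactly the two solutions `a = g` and `a = -g`. -/
theorem gaussian_subset_sums_generic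
    (k m : ℕ) (hk : 2 ≤ k) (hm : k + 2 ≤ m) :
    ∀ᵐ g ∂(Measure.pi fun _ : Fin m => gaussianReal 0 1),
      {a : Fin m → ℝ |
          ∀ S : Finset (Fin m), S.card = k →
            |∑ i ∈ S, a i| = |∑ i ∈ S, g i|} = {g, -g} := by
  have hac : Measure.pi (fun _ : Fin m => gaussianReal 0 1) ≪ volume :=
    Measure.AbsolutelyContinuous.pi fun _ => gaussianReal_absolutelyContinuous 0 one_ne_zero
  filter_upwards [ae_linearIndependent_rat hac] with g hg
  ext a
  refine ⟨fun ha => eq_or_eq_neg_of_forall_abs_sum_eq hg hk (by simpa using hm) ha, ?_⟩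
  rintro (rfl | rfl) S - <;> simp
end
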